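/- arXiv:1504.05807 — 5 statements merged into one kernel-verified Lean document; each statement's English description precedes it below -/
import Mathlib

section
/- Any unit-norm system of N = n² vectors in ℂ^n has coherence μ ≥ 1/√(n+1). -/
/-!
The frame operator `S = ∑ j, a j (a j)ᴴ` and the Gram matrix `G = (⟪a r, a s⟫)` have the same
Frobenius norm, because `tr (S²) = tr (G²)`. Keeping only the diagonal of `S` and using
Cauchy–Schwarz gives `‖G‖_F² ≥ (tr S)² / d = N² / d`, while the coherence `μ` bounds `‖G‖_F²`
above by `N + N (N - 1) μ²`. For `N = n²` vectors in dimension `d = n` this reads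
`μ² ≥ 1 / (n + 1)`.
-/

open Finset Matrix
open scoped InnerProductSpace

section Frobenius

variable {𝕜 : Type*} [RCLike 𝕜] {m n : Type*} [Fintype m] [Fintype n]

theorem Matrix.IsHermitian.trace_mul_self {A : Matrix n n 𝕜} (hA : A.IsHermitian) :
    (A * A).trace = ((∑ i, ∑ j, ‖A i j‖ ^ 2 : ℝ) : 𝕜) := by
  simp only [trace, diag, mul_apply, RCLike.ofReal_sum, RCLike.ofReal_pow]
  refine sum_congr rfl fun i _ => sum_congr rfl fun j _ => ?_
  rw [← hA.apply j i, RCLike.star_def, RCLike.mul_conj]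

theorem Matrix.sum_sq_norm_mul_conjTranspose_self (M : Matrix m n 𝕜) :
    ∑ i, ∑ k, ‖(M * Mᴴ) i k‖ ^ 2 = ∑ r, ∑ s, ‖(Mᴴ * M) r s‖ ^ 2 := by
  apply RCLike.ofReal_injective (K := 𝕜)
  rw [← (isHermitian_mul_conjTranspose_self M).trace_mul_self,
    ← (isHermitian_conjTranspose_mul_self M).trace_mul_self]
  simp only [Matrix.mul_assoc]
  rw [trace_mul_comm M]
  simp only [Matrix.mul_assoc]

theorem Matrix.sq_re_trace_le_card_mul_sum_sq_norm (A : Matrix n n 𝕜) :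
    RCLike.re A.trace ^ 2 ≤ Fintype.card n * ∑ i, ∑ j, ‖A i j‖ ^ 2 := by
  have hdiag : ∀ i, RCLike.re (A i i) ^ 2 ≤ ∑ j, ‖A i j‖ ^ 2 := fun i =>
    calc RCLike.re (A i i) ^ 2 ≤ ‖A i i‖ ^ 2 := by
          rw [← sq_abs]; exact pow_le_pow_left₀ (abs_nonneg _) (RCLike.abs_re_le_norm _) 2
      _ ≤ ∑ j, ‖A i j‖ ^ 2 :=
          single_le_sum (f := fun j => ‖A i j‖ ^ 2) (fun _ _ => by positivity) (mem_univ i)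
  calc RCLike.re A.trace ^ 2 = (∑ i, RCLike.re (A i i)) ^ 2 := by simp [trace]
    _ ≤ Fintype.card n * ∑ i, RCLike.re (A i i) ^ 2 := sq_sum_le_card_mul_sum_sq
    _ ≤ Fintype.card n * ∑ i, ∑ j, ‖A i j‖ ^ 2 := by gcongr with i; exact hdiag i

end Frobenius

section Welch

variable {𝕜 E ι : Type*} [RCLike 𝕜] [NormedAddCommGroup E] [InnerProductSpace 𝕜 E] [Fintype ι]

theorem Matrix.re_trace_gram (a : ι → E) : RCLike.re (gram 𝕜 a).trace = ∑ j, ‖a j‖ ^ 2 := by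
  simp [trace, gram_apply]

theorem sq_sum_sq_norm_le_finrank_mul_sum_sq_norm_inner [FiniteDimensional 𝕜 E] (a : ι → E) :
    (∑ j, ‖a j‖ ^ 2) ^ 2 ≤ Module.finrank 𝕜 E * ∑ r, ∑ s, ‖⟪a r, a s⟫_𝕜‖ ^ 2 := by
  let b := stdOrthonormalBasis 𝕜 E
  let M : Matrix (Fin (Module.finrank 𝕜 E)) ι 𝕜 := of fun i j => b.repr (a j) i
  have hgram : gram 𝕜 a = Mᴴ * M := gram_eq_conjTranspose_mul b a
  calc (∑ j, ‖a j‖ ^ 2) ^ 2 = RCLike.re (M * Mᴴ).trace ^ 2 := by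
        rw [trace_mul_comm, ← hgram, re_trace_gram]
    _ ≤ Module.finrank 𝕜 E * ∑ i, ∑ k, ‖(M * Mᴴ) i k‖ ^ 2 := by
        simpa using sq_re_trace_le_card_mul_sum_sq_norm (M * Mᴴ)
    _ = Module.finrank 𝕜 E * ∑ r, ∑ s, ‖⟪a r, a s⟫_𝕜‖ ^ 2 := by
        rw [sum_sq_norm_mul_conjTranspose_self, ← hgram]
        rfl

variable (𝕜) in
/-- This is `0` when `ι` has fewer than two elements (empty supremum in `ℝ`). -/
noncomputable def coherence (a : ι → E) : ℝ :=
  ⨆ p : {p : ι × ι // p.1 ≠ p.2}, ‖⟪a p.1.1, a p.1.2⟫_𝕜‖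

theorem norm_inner_le_coherence (a : ι → E) {r s : ι} (hrs : r ≠ s) :
    ‖⟪a r, a s⟫_𝕜‖ ≤ coherence 𝕜 a :=
  le_ciSup (f := fun p : {p : ι × ι // p.1 ≠ p.2} => ‖⟪a p.1.1, a p.1.2⟫_𝕜‖)
    (Set.finite_range _).bddAbove ⟨(r, s), hrs⟩

variable (𝕜) in
theorem exists_norm_inner_eq_coherence [Nontrivial ι] (a : ι → E) :
    ∃ r s, r ≠ s ∧ ‖⟪a r, a s⟫_𝕜‖ = coherence 𝕜 a := by
  obtain ⟨r, s, hrs⟩ := exists_pair_ne ι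
  have : Nonempty {p : ι × ι // p.1 ≠ p.2} := ⟨⟨(r, s), hrs⟩⟩
  obtain ⟨⟨⟨r, s⟩, hrs⟩, h⟩ := exists_eq_ciSup_of_finite
    (f := fun p : {p : ι × ι // p.1 ≠ p.2} => ‖⟪a p.1.1, a p.1.2⟫_𝕜‖)
  exact ⟨r, s, hrs, h⟩

theorem sum_sq_norm_inner_le_of_norm_eq_one {a : ι → E} (ha : ∀ j, ‖a j‖ = 1) (r : ι) :
    ∑ s, ‖⟪a r, a s⟫_𝕜‖ ^ 2 ≤ 1 + (Fintype.card ι - 1) * coherence 𝕜 a ^ 2 := by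
  classical
  have hoff : ∀ s ∈ univ.erase r, ‖⟪a r, a s⟫_𝕜‖ ^ 2 ≤ coherence 𝕜 a ^ 2 := fun s hs =>
    pow_le_pow_left₀ (norm_nonneg _) (norm_inner_le_coherence a (ne_of_mem_erase hs).symm) 2
  rw [← add_sum_erase _ _ (mem_univ r), inner_self_eq_norm_sq_to_K, ha r, RCLike.ofReal_one,
    one_pow, norm_one, one_pow]
  gcongr
  calc ∑ s ∈ univ.erase r, ‖⟪a r, a s⟫_𝕜‖ ^ 2 ≤ #(univ.erase r) • coherence 𝕜 a ^ 2 :=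
        sum_le_card_nsmul _ _ _ hoff
    _ = (Fintype.card ι - 1) * coherence 𝕜 a ^ 2 := by
        rw [card_erase_of_mem (mem_univ r), card_univ, nsmul_eq_mul,
          Nat.cast_sub (Fintype.card_pos_iff.mpr ⟨r⟩)]
        simp

theorem welch_bound [FiniteDimensional 𝕜 E] [Nonempty ι] {a : ι → E} (ha : ∀ j, ‖a j‖ = 1) :
    (Fintype.card ι : ℝ) - Module.finrank 𝕜 E ≤
      Module.finrank 𝕜 E * (Fintype.card ι - 1) * coherence 𝕜 a ^ 2 := by
  have hN : (0 : ℝ) < Fintype.card ι := Nat.cast_pos.mpr Fintype.card_pos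
  have hpotential := sq_sum_sq_norm_le_finrank_mul_sum_sq_norm_inner (𝕜 := 𝕜) a
  simp only [ha, one_pow, sum_const, card_univ, nsmul_eq_mul, mul_one] at hpotential
  have hrows := sum_le_sum fun r (_ : r ∈ univ) =>
    sum_sq_norm_inner_le_of_norm_eq_one (𝕜 := 𝕜) ha r
  rw [sum_const, card_univ, nsmul_eq_mul] at hrows
  have hdiv : (Fintype.card ι : ℝ) * Fintype.card ι ≤
      Fintype.card ι * (Module.finrank 𝕜 E * (1 + (Fintype.card ι - 1) * coherence 𝕜 a ^ 2)) := by
    linarith [mul_le_mul_of_nonneg_left hrows (Nat.cast_nonneg (α := ℝ) (Module.finrank 𝕜 E))]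
  linarith [le_of_mul_le_mul_left hdiv hN]

end Welch

/-- Welch bound: any system of `N = n²` unit-norm vectors in `ℂ^n` (with
`n > 1` so that distinct pairs exist) has coherence at least `1/√(n+1)`. -/
theorem welch_bound_n_squared (n : ℕ) (hn : 1 < n)
    (a : Fin (n ^ 2) → EuclideanSpace ℂ (Fin n)) (ha : ∀ j, ‖a j‖ = 1) :
    ∃ r s : Fin (n ^ 2), r ≠ s ∧
      1 / Real.sqrt (n + 1) ≤ ‖(inner ℂ (a r) (a s) : ℂ)‖ := by
  have : Nontrivial (Fin (n ^ 2)) := Fin.nontrivial_iff_two_le.mpr (by nlinarith)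
  obtain ⟨r, s, hrs, hμ⟩ := exists_norm_inner_eq_coherence ℂ a
  refine ⟨r, s, hrs, hμ ▸ ?_⟩
  have hwelch := welch_bound (𝕜 := ℂ) ha
  rw [finrank_euclideanSpace_fin, Fintype.card_fin] at hwelch
  push_cast at hwelch
  have hn1 : (1 : ℝ) < n := by exact_mod_cast hn
  have hμ2 : 1 / (n + 1 : ℝ) ≤ coherence ℂ a ^ 2 := by
    have hpos : (0 : ℝ) < n * (n - 1) := by nlinarith
    have key : (n : ℝ) * (n - 1) * 1 ≤ n * (n - 1) * (coherence ℂ a ^ 2 * (n + 1)) := by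
      linarith
    rw [div_le_iff₀ (by positivity)]
    exact le_of_mul_le_mul_left key hpos
  calc 1 / Real.sqrt (n + 1) = Real.sqrt (1 / (n + 1)) := by
        rw [Real.sqrt_div' _ (by positivity), Real.sqrt_one]
    _ ≤ Real.sqrt (coherence ℂ a ^ 2) := Real.sqrt_le_sqrt hμ2
    _ = coherence ℂ a := Real.sqrt_sq (hμ ▸ norm_nonneg _)
end

section
/- Let A ∈ ℂ^{n×N} have unit-norm columns and coherence μ. If (2k-1)μ < 1, then every k-sparse vector x ∈ ℂ^N is the unique minimizer of ‖x'‖₁ subject to A x' = A x; i.e., Basis Pursuit recovers all k-sparse vectors. -/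
open Finset Matrix

/-!
Put `h = x' - x`, a nonzero vector in the kernel of `A`, hence of the Gram matrix `Aᴴ A`, whose
diagonal entries are `1` and whose off-diagonal entries have modulus at most `μ`. Reading off row
`r` of `Aᴴ A h = 0` gives `|h r| ≤ μ (‖h‖₁ - |h r|)`, so `(1 + μ) |h r| ≤ μ ‖h‖₁`, and summing over
the support `S` of `x` gives `2 ∑_S |h| ≤ 2kμ/(1 + μ) ‖h‖₁ < ‖h‖₁` (the null space property).
Then the triangle inequality on `S` and the equality `x' = h` off `S` give `‖x‖₁ < ‖x'‖₁`.
-/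

section NullSpaceProperty

variable {ι E : Type*} [Fintype ι] [SeminormedAddCommGroup E]

theorem sum_norm_lt_sum_norm_add_of_two_mul_sum_lt {x h : ι → E} {S : Finset ι}
    (hxS : ∀ j ∉ S, x j = 0) (hS : 2 * ∑ j ∈ S, ‖h j‖ < ∑ j, ‖h j‖) :
    ∑ j, ‖x j‖ < ∑ j, ‖x j + h j‖ := by
  classical
  have hx : ∑ j, ‖x j‖ = ∑ j ∈ S, ‖x j‖ :=
    (sum_subset (subset_univ S) fun j _ hj => by simp [hxS j hj]).symm
  have hsplit (f : ι → ℝ) : ∑ j, f j = ∑ j ∈ S, f j + ∑ j ∈ Sᶜ, f j :=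
    (sum_add_sum_compl S f).symm
  have hon : ∑ j ∈ S, (‖x j‖ - ‖h j‖) ≤ ∑ j ∈ S, ‖x j + h j‖ :=
    sum_le_sum fun j _ => norm_sub_le_norm_add _ _
  have hoff : ∑ j ∈ Sᶜ, ‖x j + h j‖ = ∑ j ∈ Sᶜ, ‖h j‖ :=
    sum_congr rfl fun j hj => by rw [hxS j (mem_compl.1 hj), zero_add]
  rw [sum_sub_distrib] at hon
  rw [hsplit fun j => ‖h j‖] at hS
  rw [hx, hsplit fun j => ‖x j + h j‖, hoff]
  linarith

end NullSpaceProperty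

theorem conjTranspose_mul_self_apply_self {𝕜 m ι : Type*} [RCLike 𝕜] [Fintype m]
    (A : Matrix m ι 𝕜) (j : ι) :
    (Aᴴ * A) j j = ((∑ i, ‖A i j‖ ^ 2 : ℝ) : 𝕜) := by
  simp only [mul_apply, conjTranspose_apply, RCLike.star_def, RCLike.conj_mul,
    RCLike.ofReal_sum, RCLike.ofReal_pow]

section Coherence

variable {ι : Type*} [Fintype ι] [DecidableEq ι]

theorem norm_le_mul_sum_erase_of_mulVec_eq_zero {R : Type*} [SeminormedRing R]
    {G : Matrix ι ι R} {μ : ℝ} (hdiag : ∀ r, G r r = 1)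
    (hoff : ∀ r s, r ≠ s → ‖G r s‖ ≤ μ) {h : ι → R} (hGh : G *ᵥ h = 0) (r : ι) :
    ‖h r‖ ≤ μ * ∑ s ∈ univ.erase r, ‖h s‖ := by
  have hrow : h r = -∑ s ∈ univ.erase r, G r s * h s := by
    have := congrFun hGh r
    rw [mulVec, dotProduct, ← add_sum_erase _ _ (mem_univ r), hdiag, one_mul] at this
    exact eq_neg_of_add_eq_zero_left this
  calc ‖h r‖ ≤ ∑ s ∈ univ.erase r, ‖G r s * h s‖ := by
        rw [hrow, norm_neg]
        exact norm_sum_le _ _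
    _ ≤ ∑ s ∈ univ.erase r, μ * ‖h s‖ :=
        sum_le_sum fun s hs => (norm_mul_le _ _).trans <|
          mul_le_mul_of_nonneg_right (hoff r s (ne_of_mem_erase hs).symm) (norm_nonneg _)
    _ = μ * ∑ s ∈ univ.erase r, ‖h s‖ := (mul_sum _ _ _).symm

theorem two_mul_sum_norm_lt_of_norm_le_mul_sum_erase {E : Type*} [NormedAddCommGroup E]
    {h : ι → E} {μ : ℝ} (hbound : ∀ r, ‖h r‖ ≤ μ * ∑ s ∈ univ.erase r, ‖h s‖) (hh : h ≠ 0)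
    {S : Finset ι} {k : ℕ} (hS : #S ≤ k) (hk : (2 * (k : ℝ) - 1) * μ < 1) :
    2 * ∑ j ∈ S, ‖h j‖ < ∑ j, ‖h j‖ := by
  set T := ∑ j, ‖h j‖
  have herase (r : ι) : ∑ s ∈ univ.erase r, ‖h s‖ = T - ‖h r‖ :=
    eq_sub_of_add_eq' (add_sum_erase _ (fun s => ‖h s‖) (mem_univ r))
  obtain ⟨r₀, hr₀⟩ := Function.ne_iff.1 hh
  have hr₀pos : 0 < ‖h r₀‖ := norm_pos_iff.2 hr₀
  have hr₀T : ‖h r₀‖ ≤ T := single_le_sum (fun j _ => norm_nonneg (h j)) (mem_univ r₀)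
  have hμ : 0 < μ := by
    have := hbound r₀
    rw [herase] at this
    nlinarith
  have hpoint (r : ι) : (1 + μ) * ‖h r‖ ≤ μ * T := by
    have := hbound r
    rw [herase] at this
    linarith
  have hSk : (#S : ℝ) ≤ k := by exact_mod_cast hS
  have hsum : (1 + μ) * ∑ j ∈ S, ‖h j‖ ≤ k * (μ * T) :=
    calc (1 + μ) * ∑ j ∈ S, ‖h j‖ = ∑ j ∈ S, (1 + μ) * ‖h j‖ := mul_sum _ _ _
      _ ≤ ∑ _j ∈ S, μ * T := sum_le_sum fun j _ => hpoint j
      _ = #S * (μ * T) := by rw [sum_const, nsmul_eq_mul]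
      _ ≤ k * (μ * T) := by gcongr
  nlinarith

end Coherence

/-- Basis Pursuit recovery under coherence: if `A` has unit-norm columns,
coherence at most `μ`, and `(2k-1)μ < 1`, then every `k`-sparse `x` is the
unique `ℓ¹` minimizer among solutions of `A x' = A x`. -/
theorem basisPursuit_recovery_of_coherence (n N k : ℕ)
    (A : Matrix (Fin n) (Fin N) ℂ) (μ : ℝ)
    (hcol : ∀ j, ∑ i, ‖A i j‖ ^ 2 = 1)
    (hcoh : ∀ r s, r ≠ s →
      ‖∑ i, (starRingEnd ℂ) (A i r) * A i s‖ ≤ μ)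
    (hk : (2 * (k : ℝ) - 1) * μ < 1) :
    ∀ x : Fin N → ℂ, {j | x j ≠ 0}.ncard ≤ k →
      ∀ x' : Fin N → ℂ, A.mulVec x' = A.mulVec x → x' ≠ x →
        ∑ j, ‖x j‖ < ∑ j, ‖x' j‖ := by
  intro x hsupp x' hAx hne
  have hker : (Aᴴ * A) *ᵥ (x' - x) = 0 := by
    rw [← mulVec_mulVec, mulVec_sub, hAx, sub_self, mulVec_zero]
  have hbound := norm_le_mul_sum_erase_of_mulVec_eq_zero
    (fun j => by rw [conjTranspose_mul_self_apply_self, hcol, RCLike.ofReal_one])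
    (fun r s hrs => by simpa [mul_apply] using hcoh r s hrs) hker
  have hS : #{j | x j ≠ 0}.toFinset ≤ k := by rwa [← Set.ncard_eq_toFinset_card']
  have hnsp := two_mul_sum_norm_lt_of_norm_le_mul_sum_erase hbound (sub_ne_zero.2 hne) hS hk
  simpa using sum_norm_lt_sum_norm_add_of_two_mul_sum_lt (x := x)
    (fun j hj => by simpa using hj) hnsp
end

section
/- Complex Bernstein inequality: let ε_1, ..., ε_n be independent random variables each uniformly distributed on the unit circle {z ∈ ℂ : |z| = 1}. Then for every u > 0, ℙ(|Σ_{q=1}^n ε_q| ≥ n u) ≤ 2 exp(−n u²/2). -/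
/-!
Write `S = ∑ q, ε q`. Expanding `|S| ^ (2k) = S ^ k * conj S ^ k` gives a sum over pairs of maps
`f g : Fin k → Fin n` of `∏ j, ε (f j) * conj (∏ j, ε (g j))`. By independence and orthogonality
of the characters `t ↦ e^{2πimt}` on `[0, 1)`, such a term has expectation `1` if `f` and `g` have
the same fibre sizes and `0` otherwise; then `g = f ∘ σ` for a permutation `σ`, so
`E |S| ^ (2k) ≤ k! n ^ k`. Summing the exponential series gives `E exp (|S|² / 2n) ≤ ∑ 2⁻ᵏ = 2`,
and Markov's inequality for `exp (|S|² / 2n)` yields `ℙ(|S| ≥ nu) ≤ 2 exp (-(nu)² / 2n)`.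
-/

open Complex MeasureTheory ProbabilityTheory

open scoped ENNReal ComplexConjugate Finset

theorem Fintype.prod_comp_eq_prod_pow_card_fiber {α β M : Type*} [Fintype α] [Fintype β]
    [DecidableEq β] [CommMonoid M] (z : β → M) (f : α → β) :
    ∏ a, z (f a) = ∏ b, z b ^ Fintype.card {a // f a = b} := by
  simp [← Fintype.prod_fiberwise' f z]

theorem exists_perm_comp_eq_of_card_fiber_eq {α β : Type*} [Fintype α] [DecidableEq β]
    {f g : α → β} (h : ∀ b, Fintype.card {a // f a = b} = Fintype.card {a // g a = b}) :
    ∃ σ : Equiv.Perm α, f ∘ σ = g :=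
  ⟨Equiv.ofFiberEquiv fun b => Fintype.equivOfCardEq (h b).symm,
    funext (Equiv.ofFiberEquiv_map _)⟩

theorem card_pairs_card_fiber_eq_le {α β : Type*} [Fintype α] [DecidableEq α] [Fintype β]
    [DecidableEq β] :
    #{p : (α → β) × (α → β) |
        ∀ b, Fintype.card {a // p.1 a = b} = Fintype.card {a // p.2 a = b}}
      ≤ (Fintype.card α).factorial * Fintype.card β ^ Fintype.card α := by
  calc _ ≤ #((Finset.univ : Finset ((α → β) × Equiv.Perm α)).image
          fun p => (p.1, p.1 ∘ p.2)) := by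
        refine Finset.card_le_card fun p hp => ?_
        obtain ⟨σ, hσ⟩ := exists_perm_comp_eq_of_card_fiber_eq (Finset.mem_filter.1 hp).2
        exact Finset.mem_image.2 ⟨(p.1, σ), Finset.mem_univ _, by rw [hσ]⟩
    _ ≤ _ := Finset.card_image_le
    _ = _ := by simp [Fintype.card_perm, mul_comm]

noncomputable def steinhaus (t : ℝ) : ℂ := Complex.exp (2 * Real.pi * I * t)

theorem norm_steinhaus (t : ℝ) : ‖steinhaus t‖ = 1 := by
  simp [steinhaus, Complex.norm_exp]

@[fun_prop]
theorem continuous_steinhaus : Continuous steinhaus := by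
  unfold steinhaus; fun_prop

theorem steinhaus_ne_zero (t : ℝ) : steinhaus t ≠ 0 := Complex.exp_ne_zero _

theorem conj_steinhaus (t : ℝ) : conj (steinhaus t) = (steinhaus t)⁻¹ := by
  rw [steinhaus, ← Complex.exp_conj, ← Complex.exp_neg]
  congr 1
  simp [map_ofNat]

theorem steinhaus_zpow (m : ℤ) (t : ℝ) :
    steinhaus t ^ m = Complex.exp (2 * Real.pi * I * m * t) := by
  rw [steinhaus, ← Complex.exp_int_mul]
  ring_nf

theorem setIntegral_Ico_steinhaus_zpow (m : ℤ) :
    ∫ t in Set.Ico (0 : ℝ) 1, steinhaus t ^ m = if m = 0 then 1 else 0 := by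
  split_ifs with hm
  · simp [hm]
  have hc : (2 * Real.pi * I * m : ℂ) ≠ 0 := by simp [Real.pi_ne_zero, hm]
  rw [integral_Ico_eq_integral_Ioo, ← integral_Ioc_eq_integral_Ioo,
    ← intervalIntegral.integral_of_le zero_le_one]
  simp_rw [steinhaus_zpow]
  rw [integral_exp_mul_complex hc]
  simp only [ofReal_one, ofReal_zero, mul_one, mul_zero, Complex.exp_zero]
  rw [show 2 * Real.pi * I * m = m * (2 * Real.pi * I) by ring, exp_int_mul_two_pi_mul_I]
  simp

theorem norm_sq_sum_pow_eq_sum {ι : Type*} [Fintype ι] (z : ι → ℂ) (k : ℕ) :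
    (((‖∑ q, z q‖ ^ 2) ^ k : ℝ) : ℂ) =
      ∑ f : Fin k → ι, ∑ g : Fin k → ι, (∏ j, z (f j)) * conj (∏ j, z (g j)) := by
  push_cast
  rw [← Complex.mul_conj', mul_pow, Fintype.sum_pow, ← map_pow, Fintype.sum_pow, map_sum,
    Finset.sum_mul_sum]

theorem lintegral_exp_div_le_two_of_moment_le {Ω : Type*} [MeasurableSpace Ω] {μ : Measure Ω}
    {X : Ω → ℝ} (hX : AEMeasurable X μ) (hX0 : ∀ ω, 0 ≤ X ω) {c : ℝ} (hc : 0 < c)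
    (hmom : ∀ k : ℕ,
      ∫⁻ ω, ENNReal.ofReal (X ω ^ k) ∂μ ≤ ENNReal.ofReal (k.factorial * c ^ k)) :
    ∫⁻ ω, ENNReal.ofReal (Real.exp (X ω / (2 * c))) ∂μ ≤ 2 := by
  have hterm (k : ℕ) :
      ∫⁻ ω, ENNReal.ofReal ((X ω / (2 * c)) ^ k / k.factorial) ∂μ ≤ 2⁻¹ ^ k := by
    have hk : 0 ≤ ((2 * c) ^ k * k.factorial)⁻¹ := by positivity
    calc _ = ENNReal.ofReal ((2 * c) ^ k * k.factorial)⁻¹ *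
            ∫⁻ ω, ENNReal.ofReal (X ω ^ k) ∂μ := by
          rw [← lintegral_const_mul' _ _ ENNReal.ofReal_ne_top]
          congr! 2 with ω
          rw [← ENNReal.ofReal_mul hk, div_pow, div_div, div_eq_inv_mul]
      _ ≤ ENNReal.ofReal ((2 * c) ^ k * k.factorial)⁻¹ *
            ENNReal.ofReal (k.factorial * c ^ k) := by
          gcongr; exact hmom k
      _ = ENNReal.ofReal (2⁻¹ ^ k) := by
          rw [← ENNReal.ofReal_mul hk, mul_pow, inv_pow]
          congr 1
          field_simp
      _ = 2⁻¹ ^ k := by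
          rw [ENNReal.ofReal_pow (by norm_num), ENNReal.ofReal_inv_of_pos two_pos,
            ENNReal.ofReal_ofNat]
  calc ∫⁻ ω, ENNReal.ofReal (Real.exp (X ω / (2 * c))) ∂μ
      = ∫⁻ ω, ∑' k : ℕ, ENNReal.ofReal ((X ω / (2 * c)) ^ k / k.factorial) ∂μ := by
        congr! 2 with ω
        rw [Real.exp_eq_exp_ℝ, NormedSpace.exp_eq_tsum_div]
        exact ENNReal.ofReal_tsum_of_nonneg (fun k => by have := hX0 ω; positivity)
          (Real.summable_pow_div_factorial _)
    _ = ∑' k : ℕ, ∫⁻ ω, ENNReal.ofReal ((X ω / (2 * c)) ^ k / k.factorial) ∂μ :=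
        lintegral_tsum fun k => by fun_prop
    _ ≤ ∑' k : ℕ, (2⁻¹ : ℝ≥0∞) ^ k := ENNReal.tsum_le_tsum hterm
    _ = 2 := by rw [ENNReal.tsum_geometric, ENNReal.one_sub_inv_two, inv_inv]

section IndependentSteinhaus

variable {Ω ι : Type*} [MeasurableSpace Ω] {μ : Measure Ω} [Fintype ι] {θ : ι → Ω → ℝ}

theorem aemeasurable_of_map_eq_restrict_Ico {X : Ω → ℝ}
    (h : μ.map X = volume.restrict (Set.Ico (0 : ℝ) 1)) : AEMeasurable X μ :=
  .of_map_ne_zero (by simp [h])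

theorem integral_prod_steinhaus_zpow (hindep : iIndepFun θ μ)
    (hunif : ∀ q, μ.map (θ q) = volume.restrict (Set.Ico (0 : ℝ) 1)) (m : ι → ℤ) :
    ∫ ω, ∏ q, steinhaus (θ q ω) ^ m q ∂μ = if m = 0 then 1 else 0 := by
  have hθ q := aemeasurable_of_map_eq_restrict_Ico (hunif q)
  have hcont q : Continuous fun t => steinhaus t ^ m q :=
    continuous_steinhaus.zpow₀ _ fun t => .inl (steinhaus_ne_zero t)
  have hfactor q : ∫ ω, steinhaus (θ q ω) ^ m q ∂μ = if m q = 0 then 1 else 0 := by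
    rw [← setIntegral_Ico_steinhaus_zpow, ← hunif q,
      integral_map (hθ q) (hcont q).aestronglyMeasurable]
  rw [hindep.integral_fun_prod_comp hθ fun q => (hcont q).aestronglyMeasurable]
  simp only [hfactor, Finset.prod_ite_zero, funext_iff]
  simp

theorem integral_steinhaus_monomial (hindep : iIndepFun θ μ)
    (hunif : ∀ q, μ.map (θ q) = volume.restrict (Set.Ico (0 : ℝ) 1))
    {α : Type*} [Fintype α] [DecidableEq ι] (f g : α → ι) :
    ∫ ω, (∏ j, steinhaus (θ (f j) ω)) * conj (∏ j, steinhaus (θ (g j) ω)) ∂μ =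
      if ∀ q, Fintype.card {j // f j = q} = Fintype.card {j // g j = q} then 1 else 0 := by
  have hprod ω : (∏ j, steinhaus (θ (f j) ω)) * conj (∏ j, steinhaus (θ (g j) ω)) =
      ∏ q, steinhaus (θ q ω) ^
        ((Fintype.card {j // f j = q} : ℤ) - Fintype.card {j // g j = q}) := by
    simp_rw [map_prod, conj_steinhaus, Fintype.prod_comp_eq_prod_pow_card_fiber
      (fun q => steinhaus (θ q ω)), Fintype.prod_comp_eq_prod_pow_card_fiber
      (fun q => (steinhaus (θ q ω))⁻¹), ← Finset.prod_mul_distrib,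
      zpow_sub₀ (steinhaus_ne_zero _), zpow_natCast, div_eq_mul_inv, inv_pow]
  simp_rw [hprod, integral_prod_steinhaus_zpow hindep hunif, funext_iff, Pi.zero_apply,
    sub_eq_zero, Nat.cast_inj]

theorem norm_sum_steinhaus_le (x : ι → ℝ) :
    ‖∑ q, steinhaus (x q)‖ ≤ Fintype.card ι := by
  simpa [norm_steinhaus] using norm_sum_le Finset.univ fun q => steinhaus (x q)

theorem integral_norm_sum_steinhaus_sq_pow (hindep : iIndepFun θ μ)
    (hunif : ∀ q, μ.map (θ q) = volume.restrict (Set.Ico (0 : ℝ) 1)) [DecidableEq ι]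
    (k : ℕ) :
    ∫ ω, (‖∑ q, steinhaus (θ q ω)‖ ^ 2) ^ k ∂μ =
      #{p : (Fin k → ι) × (Fin k → ι) |
        ∀ q, Fintype.card {j // p.1 j = q} = Fintype.card {j // p.2 j = q}} := by
  have := hindep.isProbabilityMeasure
  have hθ q := aemeasurable_of_map_eq_restrict_Ico (hunif q)
  have hint (f g : Fin k → ι) : Integrable (fun ω =>
      (∏ j, steinhaus (θ (f j) ω)) * conj (∏ j, steinhaus (θ (g j) ω))) μ :=
    .of_bound (by fun_prop) 1 (ae_of_all _ fun ω => by simp [norm_steinhaus])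
  apply Complex.ofReal_injective
  rw [← integral_complex_ofReal]
  simp_rw [norm_sq_sum_pow_eq_sum]
  rw [integral_finsetSum _ fun f _ => integrable_finsetSum _ fun g _ => hint f g]
  simp_rw [integral_finsetSum _ fun g _ => hint _ g,
    integral_steinhaus_monomial hindep hunif]
  rw [← Finset.sum_product', Finset.univ_product_univ, Finset.sum_boole]
  norm_cast

theorem lintegral_norm_sum_steinhaus_sq_pow_le (hindep : iIndepFun θ μ)
    (hunif : ∀ q, μ.map (θ q) = volume.restrict (Set.Ico (0 : ℝ) 1)) (k : ℕ) :
    ∫⁻ ω, ENNReal.ofReal ((‖∑ q, steinhaus (θ q ω)‖ ^ 2) ^ k) ∂μ ≤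
      ENNReal.ofReal (k.factorial * Fintype.card ι ^ k) := by
  classical
  have := hindep.isProbabilityMeasure
  have hθ q := aemeasurable_of_map_eq_restrict_Ico (hunif q)
  have hint : Integrable (fun ω => (‖∑ q, steinhaus (θ q ω)‖ ^ 2) ^ k) μ :=
    .of_bound (by fun_prop) ((Fintype.card ι ^ 2) ^ k) (ae_of_all _ fun ω => by
      rw [Real.norm_of_nonneg (by positivity)]
      gcongr
      exact norm_sum_steinhaus_le _)
  rw [← ofReal_integral_eq_lintegral_ofReal hint (ae_of_all _ fun ω => by positivity),
    integral_norm_sum_steinhaus_sq_pow hindep hunif]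
  gcongr
  have hcard := card_pairs_card_fiber_eq_le (α := Fin k) (β := ι)
  rw [Fintype.card_fin] at hcard
  exact_mod_cast hcard

theorem measure_le_norm_sum_steinhaus_le (hindep : iIndepFun θ μ)
    (hunif : ∀ q, μ.map (θ q) = volume.restrict (Set.Ico (0 : ℝ) 1)) [Nonempty ι] {t : ℝ}
    (ht : 0 ≤ t) :
    μ {ω | t ≤ ‖∑ q, steinhaus (θ q ω)‖} ≤
      ENNReal.ofReal (2 * Real.exp (-t ^ 2 / (2 * Fintype.card ι))) := by
  have hθ q := aemeasurable_of_map_eq_restrict_Ico (hunif q)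
  have hn : (0 : ℝ) < Fintype.card ι := mod_cast Fintype.card_pos
  set n : ℝ := (Fintype.card ι : ℝ)
  set Y := fun ω => ENNReal.ofReal (Real.exp (‖∑ q, steinhaus (θ q ω)‖ ^ 2 / (2 * n)))
  have hY : ∫⁻ ω, Y ω ∂μ ≤ 2 :=
    lintegral_exp_div_le_two_of_moment_le (by fun_prop) (fun ω => by positivity) hn
      (lintegral_norm_sum_steinhaus_sq_pow_le hindep hunif)
  have hexp : (0 : ℝ) < Real.exp (t ^ 2 / (2 * n)) := Real.exp_pos _
  calc μ {ω | t ≤ ‖∑ q, steinhaus (θ q ω)‖}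
      ≤ μ {ω | ENNReal.ofReal (Real.exp (t ^ 2 / (2 * n))) ≤ Y ω} := by
        refine measure_mono fun ω (hω : t ≤ _) => ENNReal.ofReal_le_ofReal ?_
        gcongr
    _ ≤ (∫⁻ ω, Y ω ∂μ) / ENNReal.ofReal (Real.exp (t ^ 2 / (2 * n))) :=
        meas_ge_le_lintegral_div (by fun_prop) (by positivity) ENNReal.ofReal_ne_top
    _ ≤ 2 / ENNReal.ofReal (Real.exp (t ^ 2 / (2 * n))) := by gcongr
    _ = ENNReal.ofReal (2 * Real.exp (-t ^ 2 / (2 * n))) := by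
        rw [← ENNReal.ofReal_ofNat 2, ← ENNReal.ofReal_div_of_pos hexp, neg_div, Real.exp_neg,
          div_eq_mul_inv]

end IndependentSteinhaus

theorem complex_bernstein_general (n : ℕ) (Ω : Type*) [MeasureSpace Ω] (θ : Fin n → Ω → ℝ)
    (hindep : iIndepFun θ ℙ)
    (hunif : ∀ q, Measure.map (θ q) ℙ = volume.restrict (Set.Ico (0 : ℝ) 1))
    (u : ℝ) (hu : 0 < u) :
    ℙ {ω | (n : ℝ) * u ≤ ‖
        (∑ q, Complex.exp (2 * Real.pi * Complex.I * (θ q ω)))‖} ≤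
      ENNReal.ofReal (2 * Real.exp (-(n : ℝ) * u ^ 2 / 2)) := by
  have := hindep.isProbabilityMeasure
  rcases n.eq_zero_or_pos with rfl | hn
  · simp
  have : Nonempty (Fin n) := ⟨⟨0, hn⟩⟩
  have hexponent : -(n * u) ^ 2 / (2 * n) = -(n : ℝ) * u ^ 2 / 2 := by field_simp
  have h := measure_le_norm_sum_steinhaus_le hindep hunif (t := n * u) (by positivity)
  rwa [Fintype.card_fin, hexponent] at h

/-- Complex Bernstein inequality for Steinhaus variables: if
`ε_q = e^{2πiθ_q}` with `θ_q` independent and uniform on `[0,1)`, then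
`ℙ(|Σ ε_q| ≥ nu) ≤ 2 exp(−nu²/2)` for every `u > 0`. -/
theorem complex_bernstein (n : ℕ) (Ω : Type*) [MeasureSpace Ω]
    [IsProbabilityMeasure (ℙ : Measure Ω)] (θ : Fin n → Ω → ℝ)
    (hmeas : ∀ q, Measurable (θ q))
    (hindep : iIndepFun θ ℙ)
    (hunif : ∀ q, Measure.map (θ q) ℙ = volume.restrict (Set.Ico (0 : ℝ) 1))
    (u : ℝ) (hu : 0 < u) :
    ℙ {ω | (n : ℝ) * u ≤ ‖
        (∑ q, Complex.exp (2 * Real.pi * Complex.I * (θ q ω)))‖} ≤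
      ENNReal.ofReal (2 * Real.exp (-(n : ℝ) * u ^ 2 / 2)) :=
  complex_bernstein_general n Ω θ hindep hunif u hu
end

section
/- Khintchine moment bound: let ε_1,...,ε_n be independent Rademacher (±1 with equal probability) random variables and c_1,...,c_n ∈ ℝ. Then for every positive integer z, E[|Σ_q ε_q c_q|^{2z}] ≤ ‖c‖₂^{2z} · (2z)!/(2^z z!), the right-hand side being ‖c‖₂^{2z} times the 2z-th moment of a standard Gaussian. -/
/-!
By the multinomial theorem and independence, `E[(∑ ε_q c_q)^(2z)]` is a sum over multi-indices `k`
with `|k| = 2z` of `multinomial(k) ∏ c_q^(k_q) ∏ E[ε_q^(k_q)]`, and `E[ε^k]` is `1` for even `k`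
and `0` for odd `k`. Writing `k = 2a` with `|a| = z`, the inequality `2^m m! ≤ (2m)!` gives
`multinomial(2a) ≤ (2z)!/(2^z z!) · multinomial(a)`, and the multinomial theorem sums the
resulting bound to `(2z)!/(2^z z!) · (∑ c_q²)^z`.
-/

open MeasureTheory ProbabilityTheory Finset
open scoped Nat ENNReal

namespace Nat

lemma multinomial_two_mul_mul_le {ι : Type*} (s : Finset ι) (f : ι → ℕ) :
    multinomial s (fun i ↦ 2 * f i) * (2 ^ (∑ i ∈ s, f i) * (∑ i ∈ s, f i)!) ≤
      (2 * ∑ i ∈ s, f i)! * multinomial s f := by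
  have hspec := multinomial_spec s f
  have hspec_two_mul := multinomial_spec s (fun i ↦ 2 * f i)
  rw [← mul_sum] at hspec_two_mul
  set m := ∑ i ∈ s, f i
  set P := ∏ i ∈ s, (f i)!
  have hprod : 2 ^ m * P ≤ ∏ i ∈ s, (2 * f i)! := by
    rw [← prod_pow_eq_pow_sum, ← prod_mul_distrib]
    exact prod_le_prod' fun i _ ↦ two_pow_mul_factorial_le_factorial_two_mul (f i)
  refine Nat.le_of_mul_le_mul_left ?_ (prod_pos fun i _ ↦ (f i).factorial_pos : 0 < P)
  calc P * (multinomial s (fun i ↦ 2 * f i) * (2 ^ m * m !))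
      = (2 ^ m * P) * multinomial s (fun i ↦ 2 * f i) * m ! := by ring
    _ ≤ (∏ i ∈ s, (2 * f i)!) * multinomial s (fun i ↦ 2 * f i) * m ! := by gcongr
    _ = P * ((2 * m)! * multinomial s f) := by rw [hspec_two_mul, ← hspec]; ring

end Nat

noncomputable def rademacher : Measure ℝ :=
  (1 / 2 : ℝ≥0∞) • Measure.dirac 1 + (1 / 2 : ℝ≥0∞) • Measure.dirac (-1)

instance : IsProbabilityMeasure rademacher :=
  ⟨by simp [rademacher, ENNReal.inv_two_add_inv_two]⟩

lemma ae_abs_eq_one_rademacher : ∀ᵐ x ∂rademacher, |x| = 1 := by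
  simp [rademacher, ae_dirac_eq]

lemma integral_pow_rademacher (k : ℕ) : ∫ x, x ^ k ∂rademacher = if Even k then 1 else 0 := by
  have hint (a : ℝ) : Integrable (fun x : ℝ ↦ x ^ k) ((1 / 2 : ℝ≥0∞) • Measure.dirac a) :=
    (integrable_dirac (by simp)).smul_measure (by simp)
  rw [rademacher, integral_add_measure (hint 1) (hint (-1)), integral_smul_measure,
    integral_smul_measure, integral_dirac, integral_dirac]
  rcases Nat.even_or_odd k with hk | hk
  · simp [hk, hk.neg_one_pow]; norm_num
  · simp [hk.neg_one_pow, Nat.not_even_iff_odd.2 hk]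

lemma aemeasurable_of_map_eq_rademacher {Ω : Type*} [MeasurableSpace Ω] {μ : Measure Ω}
    {X : Ω → ℝ} (hX : μ.map X = rademacher) : AEMeasurable X μ :=
  .of_map_ne_zero (hX ▸ IsProbabilityMeasure.ne_zero _)

section RademacherSum

variable {ι Ω : Type*} [Fintype ι] [MeasurableSpace Ω] {μ : Measure Ω} {ε : ι → Ω → ℝ}

lemma integral_mul_pow_of_map_eq_rademacher {X : Ω → ℝ} (hX : μ.map X = rademacher)
    (c : ℝ) (k : ℕ) : ∫ ω, (X ω * c) ^ k ∂μ = if Even k then c ^ k else 0 := by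
  rw [← integral_map (f := fun x ↦ (x * c) ^ k) (aemeasurable_of_map_eq_rademacher hX)
    (by fun_prop), hX]
  simp_rw [mul_pow, integral_mul_const, integral_pow_rademacher]
  split_ifs <;> simp

lemma integrable_prod_mul_pow_of_map_eq_rademacher [IsFiniteMeasure μ]
    (hε : ∀ i, μ.map (ε i) = rademacher) (c : ι → ℝ) (k : ι → ℕ) :
    Integrable (fun ω ↦ ∏ i, (ε i ω * c i) ^ k i) μ := by
  have hεm (i : ι) := aemeasurable_of_map_eq_rademacher (hε i)
  have habs : ∀ᵐ ω ∂μ, ∀ i, |ε i ω| = 1 := ae_all_iff.2 fun i ↦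
    ae_of_ae_map (hεm i) ((hε i).symm ▸ ae_abs_eq_one_rademacher)
  have hmeas : AEStronglyMeasurable (fun ω ↦ ∏ i, (ε i ω * c i) ^ k i) μ :=
    Finset.aestronglyMeasurable_fun_prod univ fun i _ ↦
      (((hεm i).mul_const _).pow_const _).aestronglyMeasurable
  refine .of_bound hmeas (∏ i, |c i| ^ k i) ?_
  filter_upwards [habs] with ω hω
  simp [hω]

lemma integral_sum_mul_pow_two_mul [DecidableEq ι] (hindep : iIndepFun ε μ)
    (hε : ∀ i, μ.map (ε i) = rademacher) (c : ι → ℝ) (z : ℕ) :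
    ∫ ω, (∑ i, ε i ω * c i) ^ (2 * z) ∂μ =
      ∑ a ∈ piAntidiag univ z, (Nat.multinomial univ (fun i ↦ 2 * a i) : ℝ) *
        ∏ i, (c i ^ 2) ^ a i := by
  have := hindep.isProbabilityMeasure
  have hmonomial (k : ι → ℕ) : ∫ ω, ∏ i, (ε i ω * c i) ^ k i ∂μ =
      ∏ i, if Even (k i) then c i ^ k i else 0 := by
    rw [hindep.integral_fun_prod_comp (f := fun i x ↦ (x * c i) ^ k i)
      (fun i ↦ aemeasurable_of_map_eq_rademacher (hε i)) fun i ↦ by fun_prop]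
    simp_rw [integral_mul_pow_of_map_eq_rademacher (hε _)]
  simp_rw [sum_pow_eq_sum_piAntidiag]
  rw [integral_finsetSum _ fun k _ ↦
    (integrable_prod_mul_pow_of_map_eq_rademacher hε c k).const_mul _]
  simp_rw [integral_const_mul, hmonomial]
  rw [← sum_filter_of_ne (p := fun k ↦ ∀ i, 2 ∣ k i), ← map_nsmul_piAntidiag_univ z two_ne_zero,
    sum_map]
  · refine sum_congr rfl fun a _ ↦ ?_
    simp only [Function.Embedding.coeFn_mk, Pi.smul_apply, smul_eq_mul, even_two_mul, if_true,
      pow_mul]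
    rfl
  · intro k _ hk i
    have := prod_ne_zero_iff.1 (right_ne_zero_of_mul hk) i (mem_univ i)
    exact even_iff_two_dvd.1 (ite_ne_right_iff.1 this).1

end RademacherSum

lemma sum_multinomial_two_mul_mul_prod_pow_le {ι : Type*} [DecidableEq ι] (s : Finset ι)
    (x : ι → ℝ) (hx : ∀ i, 0 ≤ x i) (z : ℕ) :
    ∑ a ∈ piAntidiag s z, (Nat.multinomial s (fun i ↦ 2 * a i) : ℝ) * ∏ i ∈ s, x i ^ a i ≤
      ((2 * z)! / (2 ^ z * z !) : ℝ) * (∑ i ∈ s, x i) ^ z := by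
  rw [sum_pow_eq_sum_piAntidiag, mul_sum]
  refine sum_le_sum fun a ha ↦ ?_
  have hmultinomial : (Nat.multinomial s (fun i ↦ 2 * a i) : ℝ) ≤
      (2 * z)! / (2 ^ z * z !) * Nat.multinomial s a := by
    rw [div_mul_eq_mul_div, le_div_iff₀ (by positivity), ← (mem_piAntidiag.1 ha).1]
    exact_mod_cast Nat.multinomial_two_mul_mul_le s a
  rw [← mul_assoc]
  gcongr
  exact prod_nonneg fun i _ ↦ pow_nonneg (hx i) _

theorem khintchine_moment_bound_general (n : ℕ) (Ω : Type*) [MeasureSpace Ω]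
    (ε : Fin n → Ω → ℝ)
    (hindep : iIndepFun ε ℙ)
    (hlaw : ∀ q, Measure.map (ε q) ℙ =
      (1 / 2 : ENNReal) • Measure.dirac (1 : ℝ) +
        (1 / 2 : ENNReal) • Measure.dirac (-1 : ℝ))
    (c : Fin n → ℝ) (z : ℕ) :
    ∫ ω, |∑ q, ε q ω * c q| ^ (2 * z) ∂ℙ ≤
      (Real.sqrt (∑ q, c q ^ 2)) ^ (2 * z) *
        ((Nat.factorial (2 * z) : ℝ) / (2 ^ z * Nat.factorial z)) := by
  calc ∫ ω, |∑ q, ε q ω * c q| ^ (2 * z) ∂ℙ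
      = ∫ ω, (∑ q, ε q ω * c q) ^ (2 * z) ∂ℙ := by simp_rw [(even_two_mul z).pow_abs]
    _ = ∑ a ∈ piAntidiag univ z, (Nat.multinomial univ (fun q ↦ 2 * a q) : ℝ) *
          ∏ q, (c q ^ 2) ^ a q := integral_sum_mul_pow_two_mul hindep hlaw c z
    _ ≤ ((2 * z)! / (2 ^ z * z !) : ℝ) * (∑ q, c q ^ 2) ^ z :=
      sum_multinomial_two_mul_mul_prod_pow_le univ _ (fun q ↦ sq_nonneg (c q)) z
    _ = _ := by rw [pow_mul, Real.sq_sqrt (sum_nonneg fun q _ ↦ sq_nonneg (c q)), mul_comm]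

/-- Khintchine moment bound: for independent Rademacher variables `ε_q` and
real coefficients `c_q`,
`E[|Σ ε_q c_q|^{2z}] ≤ ‖c‖₂^{2z} (2z)!/(2^z z!)`. -/
theorem khintchine_moment_bound (n : ℕ) (Ω : Type*) [MeasureSpace Ω]
    [IsProbabilityMeasure (ℙ : Measure Ω)] (ε : Fin n → Ω → ℝ)
    (hmeas : ∀ q, Measurable (ε q))
    (hindep : iIndepFun ε ℙ)
    (hlaw : ∀ q, Measure.map (ε q) ℙ =
      (1 / 2 : ENNReal) • Measure.dirac (1 : ℝ) +
        (1 / 2 : ENNReal) • Measure.dirac (-1 : ℝ))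
    (c : Fin n → ℝ) (z : ℕ) (hz : 0 < z) :
    ∫ ω, |∑ q, ε q ω * c q| ^ (2 * z) ∂ℙ ≤
      (Real.sqrt (∑ q, c q ^ 2)) ^ (2 * z) *
        ((Nat.factorial (2 * z) : ℝ) / (2 ^ z * Nat.factorial z)) :=
  khintchine_moment_bound_general n Ω ε hindep hlaw c z
end

section
/- Concentration for Rademacher chaos rows: let v ∈ ℝ^N with ‖v‖₂ = 1 and h ∈ ℝ^m with ‖h‖₂ = 1/√m. For p = 1,...,m, let X_p = Σ_{q=1}^N Σ_{ℓ=1}^m ε_ℓ^{pq} h_ℓ v_q with all ε_ℓ^{pq} independent Rademacher variables, and set ‖Av‖₂² = Σ_p X_p². Then for every 0 < ε < 1, ℙ(|‖Av‖₂² − 1| ≥ ε) ≤ 2 exp(−(m/2)(ε²/2 − ε³/3)). -/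
/-!
The row sums `X_p = Σ_j c_j ε_{pj}`, with `c_{(q,ℓ)} = h_ℓ v_q` and `Σ_j c_j² = 1/m`, are
independent Rademacher series, so `Σ_p X_p²` is a sum of `m` i.i.d. copies of `X²`, and Chernoff's
bound reduces both tails to the moment generating function of `X²`.

For the upper tail, `E e^{uX} = Π_j cosh(u c_j) ≤ e^{u²/(2m)}`, and linearising `e^{tX²}` with a
Gaussian integral (`e^{tx²} = E_g e^{√(2t) x g}` for a standard Gaussian `g`) gives the χ² bound
`E e^{tX²} ≤ (1 - 2t/m)^{-1/2}`. For the lower tail, `e^{-y} ≤ 1 - y + y²/2` together with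
`E X² = 1/m` and `E X⁴ ≤ 3 (E X²)²` gives `E e^{-tX²} ≤ 1 - t/m + 3t²/(2m²)`; both moments follow
by adding one sign at a time, since flipping that sign kills the odd terms. For a deviation `δ`,
the choices `t = mδ/(2(1+δ))` and `t = mδ/2` then leave elementary inequalities in `δ`.

All expectations over the signs are computed as averages `𝔼 s : ι → Bool` over sign patterns,
since the joint law of the `ε_{pqℓ}` is the image of the uniform measure on sign patterns.
-/

open MeasureTheory ProbabilityTheory Finset Real
open scoped ENNReal BigOperators

namespace RademacherChaos

def boolSign (b : Bool) : ℝ := if b then 1 else -1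

@[simp] lemma boolSign_not (b : Bool) : boolSign (!b) = -boolSign b := by
  cases b <;> simp [boolSign]

@[simp] lemma boolSign_sq (b : Bool) : boolSign b ^ 2 = 1 := by
  cases b <;> simp [boolSign]

lemma expect_bool {K : Type*} [Semifield K] [CharZero K] (g : Bool → K) :
    𝔼 b, g b = (g true + g false) / 2 := by
  rw [Fintype.expect_eq_sum_div_card, Fintype.sum_bool, Fintype.card_bool, Nat.cast_ofNat]

lemma expect_pi_prod {K α γ : Type*} [Semifield K] [CharZero K] [Fintype α] [DecidableEq α]
    [Fintype γ] (G : α → γ → K) : 𝔼 f : α → γ, ∏ a, G a (f a) = ∏ a, 𝔼 x, G a x := by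
  simp only [Fintype.expect_eq_sum_div_card, Fintype.card_fun, Nat.cast_pow,
    prod_div_distrib, prod_const, card_univ]
  rw [prod_univ_sum, Fintype.piFinset_univ]

section SignPatterns

variable {ι : Type*} [DecidableEq ι]

lemma sum_mul_boolSign_update {F : Finset ι} {j : ι} (hj : j ∉ F) (c : ι → ℝ) (s : ι → Bool)
    (b : Bool) :
    ∑ i ∈ F, c i * boolSign (Function.update s j b i) = ∑ i ∈ F, c i * boolSign (s i) :=
  sum_congr rfl fun i hi => by rw [Function.update_of_ne (ne_of_mem_of_not_mem hi hj)]

variable [Fintype ι]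

lemma expect_mul_boolSign_eq_zero {f : (ι → Bool) → ℝ} (j : ι)
    (hf : ∀ s b, f (Function.update s j b) = f s) : 𝔼 s, f s * boolSign (s j) = 0 := by
  have hflip : Function.Involutive fun s : ι → Bool => Function.update s j (!s j) := by
    intro s; ext i; by_cases hi : i = j <;> simp [hi]
  have h := Fintype.expect_equiv (hflip.toPerm _) (fun s => -(f s * boolSign (s j)))
    (fun s => f s * boolSign (s j)) (fun s => by simp [hf])
  rw [expect_neg_distrib] at h
  linarith

section Step

variable {X : (ι → Bool) → ℝ} {j : ι}

lemma expect_add_mul_boolSign_sq (hX : ∀ s b, X (Function.update s j b) = X s) (a : ℝ) :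
    𝔼 s, (X s + a * boolSign (s j)) ^ 2 = 𝔼 s, X s ^ 2 + a ^ 2 := by
  have expand : ∀ s, (X s + a * boolSign (s j)) ^ 2
      = X s ^ 2 + 2 * a * X s * boolSign (s j) + a ^ 2 := fun s => by
    linear_combination a ^ 2 * boolSign_sq (s j)
  simp only [expand, expect_add_distrib, Fintype.expect_const]
  rw [expect_mul_boolSign_eq_zero (f := fun s => 2 * a * X s) j fun s b => by rw [hX], add_zero]

lemma expect_add_mul_boolSign_pow_four (hX : ∀ s b, X (Function.update s j b) = X s) (a : ℝ) :
    𝔼 s, (X s + a * boolSign (s j)) ^ 4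
      = 𝔼 s, X s ^ 4 + 6 * a ^ 2 * 𝔼 s, X s ^ 2 + a ^ 4 := by
  have expand : ∀ s, (X s + a * boolSign (s j)) ^ 4
      = X s ^ 4 + (4 * a * X s ^ 3 + 4 * a ^ 3 * X s) * boolSign (s j)
        + 6 * a ^ 2 * X s ^ 2 + a ^ 4 := fun s => by
    linear_combination (6 * a ^ 2 * X s ^ 2 + a ^ 4 + 4 * a ^ 3 * X s * boolSign (s j)
      + a ^ 4 * boolSign (s j) ^ 2) * boolSign_sq (s j)
  simp only [expand, expect_add_distrib, Fintype.expect_const, ← mul_expect]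
  rw [expect_mul_boolSign_eq_zero (f := fun s => 4 * a * X s ^ 3 + 4 * a ^ 3 * X s) j
    fun s b => by rw [hX], add_zero]

end Step

lemma expect_sum_mul_boolSign_sq (c : ι → ℝ) (F : Finset ι) :
    𝔼 s : ι → Bool, (∑ i ∈ F, c i * boolSign (s i)) ^ 2 = ∑ i ∈ F, c i ^ 2 := by
  induction F using Finset.induction with
  | empty => simp
  | insert j F hj ih =>
    simp only [sum_insert hj, add_comm (c j * _)]
    rw [expect_add_mul_boolSign_sq (X := fun s => ∑ i ∈ F, c i * boolSign (s i))
      (sum_mul_boolSign_update hj c), ih, add_comm]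

lemma expect_sum_mul_boolSign_pow_four_le (c : ι → ℝ) (F : Finset ι) :
    𝔼 s : ι → Bool, (∑ i ∈ F, c i * boolSign (s i)) ^ 4 ≤ 3 * (∑ i ∈ F, c i ^ 2) ^ 2 := by
  induction F using Finset.induction with
  | empty => simp
  | insert j F hj ih =>
    simp only [sum_insert hj, add_comm (c j * _)]
    rw [expect_add_mul_boolSign_pow_four (X := fun s => ∑ i ∈ F, c i * boolSign (s i))
      (sum_mul_boolSign_update hj c), expect_sum_mul_boolSign_sq]
    nlinarith [sq_nonneg (c j), sum_nonneg fun i (_ : i ∈ F) => sq_nonneg (c i)]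

lemma expect_exp_mul_sum_mul_boolSign (c : ι → ℝ) (t : ℝ) :
    𝔼 s : ι → Bool, exp (t * ∑ i, c i * boolSign (s i)) = ∏ i, cosh (t * c i) := by
  simp only [mul_sum, exp_sum]
  rw [expect_pi_prod (fun i b => exp (t * (c i * boolSign b)))]
  refine prod_congr rfl fun i _ => ?_
  rw [expect_bool, cosh_eq]
  simp [boolSign]

lemma expect_exp_mul_sum_mul_boolSign_le (c : ι → ℝ) (t : ℝ) :
    𝔼 s : ι → Bool, exp (t * ∑ i, c i * boolSign (s i)) ≤ exp (t ^ 2 * (∑ i, c i ^ 2) / 2) :=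
  calc 𝔼 s : ι → Bool, exp (t * ∑ i, c i * boolSign (s i))
      = ∏ i, cosh (t * c i) := expect_exp_mul_sum_mul_boolSign c t
    _ ≤ ∏ i, exp ((t * c i) ^ 2 / 2) :=
      prod_le_prod (fun i _ => (cosh_pos _).le) fun i _ => cosh_le_exp_half_sq _
    _ = exp (t ^ 2 * (∑ i, c i ^ 2) / 2) := by
      rw [← exp_sum, mul_sum, sum_div]
      simp only [mul_pow]

end SignPatterns

lemma exp_neg_mul_sq_add_mul {b : ℝ} (hb : b ≠ 0) (t y : ℝ) :
    exp (-b * y ^ 2 + t * y) = exp (t ^ 2 / (4 * b)) * exp (-b * (y - t / (2 * b)) ^ 2) := by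
  rw [← exp_add]
  congr 1
  field_simp
  ring

lemma integrable_exp_neg_mul_sq_add_mul {b : ℝ} (hb : 0 < b) (t : ℝ) :
    Integrable fun y => exp (-b * y ^ 2 + t * y) := by
  simp only [exp_neg_mul_sq_add_mul hb.ne']
  exact ((integrable_exp_neg_mul_sq hb).comp_sub_right _).const_mul _

lemma integral_exp_neg_mul_sq_add_mul {b : ℝ} (hb : 0 < b) (t : ℝ) :
    ∫ y, exp (-b * y ^ 2 + t * y) = √(π / b) * exp (t ^ 2 / (4 * b)) := by
  simp only [exp_neg_mul_sq_add_mul hb.ne']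
  rw [integral_const_mul, integral_sub_right_eq_self (fun y => exp (-b * y ^ 2)),
    integral_gaussian, mul_comm]

lemma expect_exp_mul_sq_le {α : Type*} [Fintype α] (Y : α → ℝ) {σ2 t : ℝ}
    (hY : ∀ u, 𝔼 a, exp (u * Y a) ≤ exp (u ^ 2 * σ2 / 2)) (ht : 0 ≤ t)
    (htσ : 2 * t * σ2 < 1) :
    𝔼 a, exp (t * Y a ^ 2) ≤ (√(1 - 2 * t * σ2))⁻¹ := by
  set r := √(2 * t)
  have hr : r ^ 2 = 2 * t := sq_sqrt (by linarith)
  have hb : (0 : ℝ) < 1 / 2 - t * σ2 := by linarith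
  set C := √(π / (1 / 2))
  have hC : 0 < C := sqrt_pos.2 (by positivity)
  have hlin : ∀ y, exp (t * y ^ 2) = C⁻¹ * ∫ g, exp (-(1 / 2) * g ^ 2 + r * y * g) := by
    intro y
    rw [integral_exp_neg_mul_sq_add_mul (by norm_num), inv_mul_cancel_left₀ hC.ne', mul_pow, hr]
    ring_nf
  have hpt : ∀ g, 𝔼 a, exp (-(1 / 2) * g ^ 2 + r * Y a * g)
      ≤ exp (-(1 / 2 - t * σ2) * g ^ 2 + 0 * g) := by
    intro g
    calc 𝔼 a, exp (-(1 / 2) * g ^ 2 + r * Y a * g)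
        = exp (-(1 / 2) * g ^ 2) * 𝔼 a, exp ((r * g) * Y a) := by
          rw [mul_expect]
          exact expect_congr rfl fun a _ => by rw [← exp_add]; ring_nf
      _ ≤ exp (-(1 / 2) * g ^ 2) * exp ((r * g) ^ 2 * σ2 / 2) := by gcongr; exact hY _
      _ = exp (-(1 / 2 - t * σ2) * g ^ 2 + 0 * g) := by
          rw [← exp_add, mul_pow, hr]; ring_nf
  calc 𝔼 a, exp (t * Y a ^ 2)
      = C⁻¹ * ∫ g, 𝔼 a, exp (-(1 / 2) * g ^ 2 + r * Y a * g) := by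
        simp only [hlin, ← mul_expect, Fintype.expect_eq_sum_div_card]
        rw [integral_div, integral_finsetSum _ fun a _ =>
          integrable_exp_neg_mul_sq_add_mul (by norm_num) _]
    _ ≤ C⁻¹ * ∫ g, exp (-(1 / 2 - t * σ2) * g ^ 2 + 0 * g) := by
        refine mul_le_mul_of_nonneg_left
          (integral_mono ?_ (integrable_exp_neg_mul_sq_add_mul hb 0) hpt) (inv_pos.2 hC).le
        simp only [Fintype.expect_eq_sum_div_card]
        exact (integrable_finsetSum _ fun a _ =>
          integrable_exp_neg_mul_sq_add_mul (by norm_num) _).div_const _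
    _ = (√(1 - 2 * t * σ2))⁻¹ := by
        rw [integral_exp_neg_mul_sq_add_mul hb, zero_pow two_ne_zero, zero_div, exp_zero,
          mul_one, ← sqrt_inv, ← sqrt_inv, ← sqrt_mul (by positivity)]
        congr 1
        field_simp

lemma exp_neg_le_one_sub_add_sq_div_two {x : ℝ} (hx : 0 ≤ x) :
    exp (-x) ≤ 1 - x + x ^ 2 / 2 := by
  have hexp : 1 + x + x ^ 2 / 2 + x ^ 3 / 6 ≤ exp x := by
    simpa [sum_range_succ, Nat.factorial] using sum_le_exp_of_nonneg hx 4
  have hinv : exp (-x) * exp x = 1 := by rw [← exp_add, neg_add_cancel, exp_zero]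
  nlinarith [exp_pos (-x), exp_pos x, pow_nonneg hx 3, pow_nonneg hx 4, pow_nonneg hx 5]

section Rows

variable {ι : Type*} [Fintype ι] [DecidableEq ι]

lemma expect_exp_mul_sq_sum_mul_boolSign_le (c : ι → ℝ) {t : ℝ} (ht : 0 ≤ t)
    (htc : 2 * t * ∑ i, c i ^ 2 < 1) :
    𝔼 s : ι → Bool, exp (t * (∑ i, c i * boolSign (s i)) ^ 2)
      ≤ (√(1 - 2 * t * ∑ i, c i ^ 2))⁻¹ :=
  expect_exp_mul_sq_le _ (expect_exp_mul_sum_mul_boolSign_le c) ht htc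

lemma expect_exp_neg_mul_sq_sum_mul_boolSign_le (c : ι → ℝ) {t : ℝ} (ht : 0 ≤ t) :
    𝔼 s : ι → Bool, exp (-t * (∑ i, c i * boolSign (s i)) ^ 2)
      ≤ 1 - t * ∑ i, c i ^ 2 + 3 / 2 * (t * ∑ i, c i ^ 2) ^ 2 := by
  set X := fun s : ι → Bool => ∑ i, c i * boolSign (s i)
  calc 𝔼 s, exp (-t * X s ^ 2)
      ≤ 𝔼 s, (1 - t * X s ^ 2 + t ^ 2 / 2 * X s ^ 4) := by
        refine expect_le_expect fun s _ => ?_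
        rw [neg_mul]
        exact (exp_neg_le_one_sub_add_sq_div_two (by positivity)).trans_eq (by ring)
    _ = 1 - t * 𝔼 s, X s ^ 2 + t ^ 2 / 2 * 𝔼 s, X s ^ 4 := by
        simp only [expect_add_distrib, expect_sub_distrib, Fintype.expect_const, ← mul_expect]
    _ ≤ 1 - t * ∑ i, c i ^ 2 + 3 / 2 * (t * ∑ i, c i ^ 2) ^ 2 := by
        rw [expect_sum_mul_boolSign_sq c univ]
        have := expect_sum_mul_boolSign_pow_four_le c univ
        nlinarith [sq_nonneg t]

lemma expect_exp_mul_sum_rows_sq {α : Type*} [Fintype α] [DecidableEq α] (c : ι → ℝ) (t : ℝ) :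
    𝔼 s : α × ι → Bool, exp (t * ∑ p, (∑ j, c j * boolSign (s (p, j))) ^ 2)
      = (𝔼 s : ι → Bool, exp (t * (∑ j, c j * boolSign (s j)) ^ 2)) ^ Fintype.card α := by
  rw [← Fintype.expect_equiv (Equiv.curry α ι Bool).symm
    (fun s => ∏ p, exp (t * (∑ j, c j * boolSign (s p j)) ^ 2)) _
    fun s => by simp [mul_sum, exp_sum],
    expect_pi_prod fun (_ : α) (u : ι → Bool) => exp (t * (∑ j, c j * boolSign (u j)) ^ 2),
    prod_const, card_univ]

end Rows

noncomputable def rademacherMeasure : Measure ℝ :=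
  (1 / 2 : ℝ≥0∞) • Measure.dirac 1 + (1 / 2 : ℝ≥0∞) • Measure.dirac (-1)

lemma uniformOn_univ_bool :
    (uniformOn Set.univ : Measure Bool)
      = (1 / 2 : ℝ≥0∞) • Measure.dirac true + (1 / 2 : ℝ≥0∞) • Measure.dirac false := by
  rw [← Measure.sum_smul_dirac (uniformOn Set.univ), Measure.sum_fintype, Fintype.sum_bool,
    uniformOn_univ, uniformOn_univ]
  simp

lemma map_boolSign_uniformOn_univ :
    (uniformOn Set.univ : Measure Bool).map boolSign = rademacherMeasure := by
  rw [uniformOn_univ_bool, Measure.map_add _ _ (by fun_prop), Measure.map_smul, Measure.map_smul,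
    Measure.map_dirac, Measure.map_dirac]
  rfl

section Transfer

variable {ι : Type*} [Fintype ι] {Ω : Type*} [MeasurableSpace Ω] {μ : Measure Ω}
  [IsProbabilityMeasure μ] {ε : ι → Ω → ℝ}

lemma map_fun_eq_map_uniformOn (hmeas : ∀ i, Measurable (ε i)) (hindep : iIndepFun ε μ)
    (hlaw : ∀ i, μ.map (ε i) = rademacherMeasure) :
    μ.map (fun ω i => ε i ω)
      = (uniformOn Set.univ).map (fun (s : ι → Bool) i => boolSign (s i)) := by
  rw [(iIndepFun_iff_map_fun_eq_pi_map fun i => (hmeas i).aemeasurable).1 hindep]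
  simp_rw [hlaw, ← map_boolSign_uniformOn_univ]
  rw [← Measure.pi_map_pi fun _ => by fun_prop, ← uniformOn_pi, Set.pi_univ]

lemma integrable_comp (hmeas : ∀ i, Measurable (ε i)) (hindep : iIndepFun ε μ)
    (hlaw : ∀ i, μ.map (ε i) = rademacherMeasure) {F : (ι → ℝ) → ℝ} (hF : Measurable F) :
    Integrable (fun ω => F (fun i => ε i ω)) μ := by
  refine (integrable_map_measure hF.aestronglyMeasurable (by fun_prop)).1 ?_
  rw [map_fun_eq_map_uniformOn hmeas hindep hlaw]
  exact (integrable_map_measure hF.aestronglyMeasurable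
    (Measurable.of_discrete (f := fun (s : ι → Bool) i => boolSign (s i))).aemeasurable).2
    .of_finite

lemma integral_comp_eq_expect [DecidableEq ι] (hmeas : ∀ i, Measurable (ε i))
    (hindep : iIndepFun ε μ) (hlaw : ∀ i, μ.map (ε i) = rademacherMeasure) {F : (ι → ℝ) → ℝ}
    (hF : Measurable F) :
    ∫ ω, F (fun i => ε i ω) ∂μ = 𝔼 s : ι → Bool, F (fun i => boolSign (s i)) := by
  rw [← integral_map (by fun_prop) hF.aestronglyMeasurable,
    map_fun_eq_map_uniformOn hmeas hindep hlaw,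
    integral_map (Measurable.of_discrete (f := fun (s : ι → Bool) i => boolSign (s i))).aemeasurable
      hF.aestronglyMeasurable, integral_fintype .of_finite]
  simp only [Measure.real, uniformOn_univ, Measure.count_singleton, ENNReal.toReal_div,
    ENNReal.toReal_one, ENNReal.toReal_natCast, smul_eq_mul, ← mul_sum,
    Fintype.expect_eq_sum_div_card]
  ring

end Transfer

section Tails

lemma exp_neg_half_mul_sqrt_one_add_le {δ : ℝ} (h0 : 0 ≤ δ) (h1 : δ ≤ 1) :
    exp (-(δ / 2)) * √(1 + δ) ≤ exp (-(δ ^ 2 / 2 - δ ^ 3 / 3) / 2) := by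
  set r := δ - δ ^ 2 / 2 + δ ^ 3 / 3 with hr_def
  have hr : 0 ≤ r := by nlinarith [mul_nonneg h0 (sub_nonneg.2 h1), pow_nonneg h0 3]
  have hexp : 1 + r + r ^ 2 / 2 + r ^ 3 / 6 ≤ exp r := by
    simpa [sum_range_succ, Nat.factorial] using sum_le_exp_of_nonneg hr 4
  have hlog : 1 + δ ≤ exp r := by
    have : 0 ≤ 1 + r + r ^ 2 / 2 + r ^ 3 / 6 - (1 + δ) := by
      simp only [r]; ring_nf
      nlinarith [pow_nonneg h0 4, pow_nonneg h0 5, pow_nonneg h0 6, pow_nonneg h0 7,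
        pow_nonneg h0 8, pow_nonneg h0 9, pow_le_one₀ h0 h1 (n := 4)]
    linarith
  have hsqrt : √(1 + δ) ≤ exp (r / 2) := by
    rw [sqrt_le_left (exp_pos _).le, ← exp_nat_mul]
    convert hlog using 2
    push_cast; ring
  calc exp (-(δ / 2)) * √(1 + δ) ≤ exp (-(δ / 2)) * exp (r / 2) := by gcongr
    _ = exp (-(δ ^ 2 / 2 - δ ^ 3 / 3) / 2) := by rw [← exp_add, hr_def]; ring_nf

lemma exp_mul_one_sub_div_two_mul_le {δ : ℝ} (h0 : 0 ≤ δ) (h1 : δ ≤ 1) :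
    exp (δ * (1 - δ) / 2) * (1 - δ / 2 + 3 / 8 * δ ^ 2)
      ≤ exp (-(δ ^ 2 / 2 - δ ^ 3 / 3) / 2) := by
  set u := δ / 2 - δ ^ 2 / 4 - δ ^ 3 / 6 with hu_def
  have hδ2 : δ ^ 2 ≤ δ := by nlinarith
  have hδ3 : δ ^ 3 ≤ δ ^ 2 := by nlinarith
  have hu0 : 0 ≤ u := by nlinarith
  have hu2 : u < 2 := by nlinarith
  have hB : 0 < 1 - δ / 2 + 3 / 8 * δ ^ 2 := by nlinarith
  -- the Padé bound `exp u ≤ (2 + u) / (2 - u)` is sharp enough to third order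
  have hpade : exp u * (1 - δ / 2 + 3 / 8 * δ ^ 2) ≤ 1 := by
    calc exp u * (1 - δ / 2 + 3 / 8 * δ ^ 2)
        ≤ (2 + u) / (2 - u) * (1 - δ / 2 + 3 / 8 * δ ^ 2) := by
          gcongr; exact exp_le_two_add_div_two_sub hu0 hu2
      _ ≤ 1 := by
          rw [div_mul_eq_mul_div, div_le_one (by linarith)]
          simp only [u]
          nlinarith [pow_nonneg h0 3, pow_nonneg h0 4, pow_nonneg h0 5]
  calc exp (δ * (1 - δ) / 2) * (1 - δ / 2 + 3 / 8 * δ ^ 2)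
      = exp (-(δ ^ 2 / 2 - δ ^ 3 / 3) / 2) * (exp u * (1 - δ / 2 + 3 / 8 * δ ^ 2)) := by
        rw [← mul_assoc, ← exp_add, hu_def]; ring_nf
    _ ≤ exp (-(δ ^ 2 / 2 - δ ^ 3 / 3) / 2) := mul_le_of_le_one_right (exp_pos _).le hpade

variable {Ω : Type*} [MeasurableSpace Ω] {μ : Measure Ω} [IsProbabilityMeasure μ] {Y : Ω → ℝ}
  {m : ℕ} {δ : ℝ}

lemma measureReal_one_add_le_le (hint : ∀ t, Integrable (fun ω => exp (t * Y ω)) μ)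
    (hmgf : ∀ t : ℝ, 0 ≤ t → 2 * t < m → mgf Y μ t ≤ (√(1 - 2 * t / m))⁻¹ ^ m)
    (hm : 0 < m) (hδ0 : 0 ≤ δ) (hδ1 : δ ≤ 1) :
    μ.real {ω | 1 + δ ≤ Y ω} ≤ exp (-(m / 2) * (δ ^ 2 / 2 - δ ^ 3 / 3)) := by
  have hm' : (0 : ℝ) < m := Nat.cast_pos.2 hm
  set t : ℝ := m * δ / (2 * (1 + δ)) with ht
  have ht0 : 0 ≤ t := by positivity
  have htm : 2 * t < m := by
    rw [ht, mul_div_assoc', div_lt_iff₀ (by positivity)]; nlinarith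
  have hsq : (√(1 - 2 * t / m))⁻¹ = √(1 + δ) := by
    rw [← sqrt_inv]; congr 1; rw [ht]; field_simp; ring
  calc μ.real {ω | 1 + δ ≤ Y ω} ≤ exp (-t * (1 + δ)) * mgf Y μ t :=
        measure_ge_le_exp_mul_mgf _ ht0 (hint t)
    _ ≤ exp (-t * (1 + δ)) * √(1 + δ) ^ m := by
        gcongr; rw [← hsq]; exact hmgf t ht0 htm
    _ = (exp (-(δ / 2)) * √(1 + δ)) ^ m := by
        rw [mul_pow, ← exp_nat_mul, ht]; field_simp
    _ ≤ exp (-(δ ^ 2 / 2 - δ ^ 3 / 3) / 2) ^ m := by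
        gcongr; exact exp_neg_half_mul_sqrt_one_add_le hδ0 hδ1
    _ = exp (-(m / 2) * (δ ^ 2 / 2 - δ ^ 3 / 3)) := by
        rw [← exp_nat_mul]; ring_nf

lemma measureReal_le_one_sub_le (hint : ∀ t, Integrable (fun ω => exp (t * Y ω)) μ)
    (hmgf : ∀ t : ℝ, 0 ≤ t → mgf Y μ (-t) ≤ (1 - t / m + 3 / 2 * (t / m) ^ 2) ^ m)
    (hm : 0 < m) (hδ0 : 0 ≤ δ) (hδ1 : δ ≤ 1) :
    μ.real {ω | Y ω ≤ 1 - δ} ≤ exp (-(m / 2) * (δ ^ 2 / 2 - δ ^ 3 / 3)) := by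
  have hm' : (0 : ℝ) < m := Nat.cast_pos.2 hm
  set t : ℝ := m * δ / 2 with ht
  have ht0 : 0 ≤ t := by positivity
  have htm : t / m = δ / 2 := by rw [ht]; field_simp
  calc μ.real {ω | Y ω ≤ 1 - δ} ≤ exp (-(-t) * (1 - δ)) * mgf Y μ (-t) :=
        measure_le_le_exp_mul_mgf _ (neg_nonpos.2 ht0) (hint (-t))
    _ ≤ exp (-(-t) * (1 - δ)) * (1 - t / m + 3 / 2 * (t / m) ^ 2) ^ m := by
        gcongr; exact hmgf t ht0
    _ = (exp (δ * (1 - δ) / 2) * (1 - δ / 2 + 3 / 8 * δ ^ 2)) ^ m := by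
        rw [htm, mul_pow, ← exp_nat_mul, ht]; ring_nf
    _ ≤ exp (-(δ ^ 2 / 2 - δ ^ 3 / 3) / 2) ^ m := by
        have : 0 ≤ 1 - δ / 2 + 3 / 8 * δ ^ 2 := by nlinarith
        gcongr; exact exp_mul_one_sub_div_two_mul_le hδ0 hδ1
    _ = exp (-(m / 2) * (δ ^ 2 / 2 - δ ^ 3 / 3)) := by
        rw [← exp_nat_mul]; ring_nf

lemma measureReal_abs_sub_one_ge_le (hint : ∀ t, Integrable (fun ω => exp (t * Y ω)) μ)
    (hupper : ∀ t : ℝ, 0 ≤ t → 2 * t < m → mgf Y μ t ≤ (√(1 - 2 * t / m))⁻¹ ^ m)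
    (hlower : ∀ t : ℝ, 0 ≤ t → mgf Y μ (-t) ≤ (1 - t / m + 3 / 2 * (t / m) ^ 2) ^ m)
    (hδ0 : 0 ≤ δ) (hδ1 : δ ≤ 1) :
    μ.real {ω | δ ≤ |Y ω - 1|} ≤ 2 * exp (-(m / 2) * (δ ^ 2 / 2 - δ ^ 3 / 3)) := by
  rcases Nat.eq_zero_or_pos m with rfl | hm
  · simpa using (measureReal_le_one (μ := μ) (s := {ω | δ ≤ |Y ω - 1|})).trans one_le_two
  have hsplit : {ω | δ ≤ |Y ω - 1|} ⊆ {ω | 1 + δ ≤ Y ω} ∪ {ω | Y ω ≤ 1 - δ} := by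
    intro ω (hω : δ ≤ |Y ω - 1|)
    rcases le_abs'.1 hω with h | h
    · exact Or.inr (show Y ω ≤ 1 - δ by linarith)
    · exact Or.inl (show 1 + δ ≤ Y ω by linarith)
  calc μ.real {ω | δ ≤ |Y ω - 1|}
      ≤ μ.real {ω | 1 + δ ≤ Y ω} + μ.real {ω | Y ω ≤ 1 - δ} :=
        (measureReal_mono hsplit).trans (measureReal_union_le _ _)
    _ ≤ 2 * exp (-(m / 2) * (δ ^ 2 / 2 - δ ^ 3 / 3)) := by
        linarith [measureReal_one_add_le_le hint hupper hm hδ0 hδ1,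
          measureReal_le_one_sub_le hint hlower hm hδ0 hδ1]

end Tails

section Chaos

variable {α ι : Type*} [Fintype α] [Fintype ι]
  {Ω : Type*} [MeasurableSpace Ω] {μ : Measure Ω} [IsProbabilityMeasure μ] {ε : α × ι → Ω → ℝ}

lemma integrable_exp_mul_sum_rows_sq (hmeas : ∀ i, Measurable (ε i)) (hindep : iIndepFun ε μ)
    (hlaw : ∀ i, μ.map (ε i) = rademacherMeasure) (c : ι → ℝ) (t : ℝ) :
    Integrable (fun ω => exp (t * ∑ p, (∑ j, c j * ε (p, j) ω) ^ 2)) μ :=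
  integrable_comp hmeas hindep hlaw (F := fun x => exp (t * ∑ p, (∑ j, c j * x (p, j)) ^ 2))
    (by fun_prop)

lemma mgf_sum_rows_sq [DecidableEq α] [DecidableEq ι] (hmeas : ∀ i, Measurable (ε i))
    (hindep : iIndepFun ε μ) (hlaw : ∀ i, μ.map (ε i) = rademacherMeasure) (c : ι → ℝ) (t : ℝ) :
    mgf (fun ω => ∑ p, (∑ j, c j * ε (p, j) ω) ^ 2) μ t
      = (𝔼 s : ι → Bool, exp (t * (∑ j, c j * boolSign (s j)) ^ 2)) ^ Fintype.card α :=
  (integral_comp_eq_expect hmeas hindep hlaw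
    (F := fun x => exp (t * ∑ p, (∑ j, c j * x (p, j)) ^ 2)) (by fun_prop)).trans
    (expect_exp_mul_sum_rows_sq c t)

end Chaos

end RademacherChaos

open RademacherChaos in
/-- Concentration for rows of Rademacher series: with `X_p = Σ_q Σ_ℓ
ε_ℓ^{pq} h_ℓ v_q`, `‖v‖₂ = 1`, `‖h‖₂ = 1/√m`, one has
`ℙ(|Σ_p X_p² − 1| ≥ ε) ≤ 2 exp(−(m/2)(ε²/2 − ε³/3))`. -/
theorem rademacher_chaos_concentration (m N : ℕ) (Ω : Type*) [MeasureSpace Ω]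
    [IsProbabilityMeasure (ℙ : Measure Ω)]
    (ε : Fin m × Fin N × Fin m → Ω → ℝ)
    (hmeas : ∀ i, Measurable (ε i))
    (hindep : iIndepFun ε ℙ)
    (hlaw : ∀ i, Measure.map (ε i) ℙ =
      (1 / 2 : ENNReal) • Measure.dirac (1 : ℝ) +
        (1 / 2 : ENNReal) • Measure.dirac (-1 : ℝ))
    (v : Fin N → ℝ) (hv : ∑ q, v q ^ 2 = 1)
    (h : Fin m → ℝ) (hh : ∑ l, h l ^ 2 = 1 / m)
    (ε' : ℝ) (hε0 : 0 < ε') (hε1 : ε' < 1) :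
    ℙ {ω | ε' ≤
        |(∑ p, (∑ q, ∑ l, ε (p, q, l) ω * h l * v q) ^ 2) - 1|} ≤
      ENNReal.ofReal
        (2 * Real.exp (-((m : ℝ) / 2) * (ε' ^ 2 / 2 - ε' ^ 3 / 3))) := by
  set c : Fin N × Fin m → ℝ := fun j => h j.2 * v j.1
  have hc : ∑ j, c j ^ 2 = 1 / m := by
    simp only [c, Fintype.sum_prod_type, mul_pow, ← mul_sum, ← sum_mul, hh, hv, mul_one]
  have hrows : ∀ ω, ∑ p, (∑ q, ∑ l, ε (p, q, l) ω * h l * v q) ^ 2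
      = ∑ p, (∑ j, c j * ε (p, j) ω) ^ 2 := fun ω => by
    simp only [c, Fintype.sum_prod_type]
    congr! 4 with p q l; ring
  simp only [hrows]
  rw [← ofReal_measureReal]
  refine ENNReal.ofReal_le_ofReal (measureReal_abs_sub_one_ge_le
    (integrable_exp_mul_sum_rows_sq hmeas hindep hlaw c) ?_ ?_ hε0.le hε1.le)
  · intro t ht htm
    rw [mgf_sum_rows_sq hmeas hindep hlaw, Fintype.card_fin, ← mul_one_div (2 * t), ← hc]
    gcongr
    exact expect_exp_mul_sq_sum_mul_boolSign_le c ht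
      (by rwa [hc, mul_one_div, div_lt_one (by linarith)])
  · intro t ht
    rw [mgf_sum_rows_sq hmeas hindep hlaw, Fintype.card_fin, ← mul_one_div t, ← hc]
    gcongr
    exact expect_exp_neg_mul_sq_sum_mul_boolSign_le c ht
end
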